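/- arXiv:1604.02714 — 4 statements merged into one kernel-verified Lean document; each statement's English description precedes it below -/
import Mathlib

section
/- If A is a semi-canonical n×m binary matrix with r(A) = ⟨x_1,…,x_n⟩ and c(A) = ⟨y_1,…,y_m⟩, then there exist integers s, t with 0 ≤ s ≤ m and 0 ≤ t ≤ n such that x_1 = 2^s − 1 and y_1 = 2^t − 1. -/
/-- The value of a row of length `m` read as a binary number (most significant digit first). -/
def rowVal (m : ℕ) (row : Fin m → Bool) : ℕ :=
  ∑ j : Fin m, (row j).toNat * 2 ^ (m - 1 - (j : ℕ))

/-- `r(A)`: the tuple of row values of a binary matrix. -/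
def rtup {n m : ℕ} (A : Fin n → Fin m → Bool) : Fin n → ℕ :=
  fun i => rowVal m (A i)

/-- `c(A)`: the tuple of column values of a binary matrix. -/
def ctup {n m : ℕ} (A : Fin n → Fin m → Bool) : Fin m → ℕ :=
  fun j => rowVal n (fun i => A i j)

/-- `A ∼ B`: `B` is obtained from `A` by permuting rows and columns. -/
def MatEquiv {n m : ℕ} (A B : Fin n → Fin m → Bool) : Prop :=
  ∃ (ρ : Equiv.Perm (Fin n)) (σ : Equiv.Perm (Fin m)), ∀ i j, B i j = A (ρ i) (σ j)

/-- `A` is semi-canonical: both `r(A)` and `c(A)` are weakly increasing. -/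
def SemiCanonical {n m : ℕ} (A : Fin n → Fin m → Bool) : Prop :=
  Monotone (rtup A) ∧ Monotone (ctup A)

/-- `A` is canonical: `r(A)` is the lexicographic minimum over the equivalence class of `A`. -/
def Canonical {n m : ℕ} (A : Fin n → Fin m → Bool) : Prop :=
  ∀ B, MatEquiv A B → toLex (rtup A) ≤ toLex (rtup B)

lemma pow_sum_aux (M : ℕ) : ∑ j : Fin M, 2 ^ (M - 1 - (j:ℕ)) = 2 ^ M - 1 := by
  induction M with
  | zero => simp
  | succ M ih =>
    rw [Fin.sum_univ_succ]
    simp only [Fin.val_zero, Fin.val_succ]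
    have h1 : ∀ j : Fin M, (2:ℕ) ^ (M + 1 - 1 - ((j:ℕ)+1)) = 2 ^ (M - 1 - (j:ℕ)) := by
      intro j; congr 1; omega
    rw [Finset.sum_congr rfl (fun j _ => h1 j), ih]
    have h2 : (2:ℕ) ^ (M+1) = 2^M * 2 := pow_succ 2 M
    have h3 : (1:ℕ) ≤ 2 ^ M := Nat.one_le_two_pow
    simp only [Nat.add_sub_cancel, Nat.sub_zero]
    omega

lemma rowVal_le (M : ℕ) (row : Fin M → Bool) : rowVal M row ≤ 2 ^ M - 1 := by
  calc rowVal M row ≤ ∑ j : Fin M, 2 ^ (M - 1 - (j:ℕ)) := by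
        apply Finset.sum_le_sum
        intro j _
        calc (row j).toNat * 2 ^ (M - 1 - (j:ℕ)) ≤ 1 * 2 ^ (M - 1 - (j:ℕ)) :=
              Nat.mul_le_mul_right _ (Bool.toNat_le _)
          _ = 2 ^ (M - 1 - (j:ℕ)) := one_mul _
    _ = 2 ^ M - 1 := pow_sum_aux M

lemma rowVal_succ (M : ℕ) (row : Fin (M+1) → Bool) :
    rowVal (M+1) row = (row 0).toNat * 2 ^ M + rowVal M (fun j => row j.succ) := by
  unfold rowVal
  rw [Fin.sum_univ_succ]
  simp only [Fin.val_zero, Fin.val_succ, Nat.add_sub_cancel, Nat.sub_zero]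
  congr 1
  apply Finset.sum_congr rfl
  intro j _
  congr 2
  omega

lemma top_bit (M : ℕ) (row : Fin (M+1) → Bool) :
    row 0 = true ↔ 2 ^ M ≤ rowVal (M+1) row := by
  rw [rowVal_succ]
  have h := rowVal_le M (fun j => row j.succ)
  have h3 : (1:ℕ) ≤ 2 ^ M := Nat.one_le_two_pow
  cases hr : row 0 <;> simp <;> omega

lemma upset_rowVal : ∀ (M : ℕ) (row : Fin M → Bool),
    (∀ j j' : Fin M, j ≤ j' → row j = true → row j' = true) →
    ∃ s ≤ M, rowVal M row = 2 ^ s - 1 := by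
  intro M
  induction M with
  | zero => intro row _; exact ⟨0, le_refl _, by simp [rowVal]⟩
  | succ M ih =>
    intro row hup
    cases hr : row 0 with
    | true =>
      refine ⟨M+1, le_refl _, ?_⟩
      have hall : ∀ j, row j = true := fun j => hup 0 j (Fin.zero_le j) hr
      unfold rowVal
      simp only [hall, Bool.toNat_true, one_mul]
      exact pow_sum_aux (M+1)
    | false =>
      obtain ⟨s, hs, hv⟩ := ih (fun j => row j.succ)
        (fun j j' hle h => hup j.succ j'.succ (by simpa using hle) h)
      exact ⟨s, Nat.le_succ_of_le hs, by rw [rowVal_succ, hr]; simpa using hv⟩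

theorem semiCanonical_first_values {n m : ℕ} (A : Fin (n + 1) → Fin (m + 1) → Bool)
    (hA : SemiCanonical A) :
    ∃ s ≤ m + 1, ∃ t ≤ n + 1, rtup A 0 = 2 ^ s - 1 ∧ ctup A 0 = 2 ^ t - 1 := by
  obtain ⟨hr, hc⟩ := hA
  -- row 0 is an up-set because column values are monotone
  obtain ⟨s, hs, hsv⟩ := upset_rowVal (m+1) (A 0) (by
    intro j j' hle h
    have h1 : 2 ^ n ≤ ctup A j := (top_bit n (fun i => A i j)).mp h
    have h2 : ctup A j ≤ ctup A j' := hc hle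
    exact (top_bit n (fun i => A i j')).mpr (le_trans h1 h2))
  -- column 0 is an up-set because row values are monotone
  obtain ⟨t, ht, htv⟩ := upset_rowVal (n+1) (fun i => A i 0) (by
    intro i i' hle h
    have h1 : 2 ^ m ≤ rtup A i := (top_bit m (A i)).mp h
    have h2 : rtup A i ≤ rtup A i' := hr hle
    exact (top_bit m (A i')).mpr (le_trans h1 h2))
  exact ⟨s, hs, t, ht, hsv, htv⟩
end

section
/- Let A be an n×m binary matrix and X_1, X_2, …, X_s transpositions of rows such that r(X_1X_2⋯X_sA) < r(X_2⋯X_sA) < ⋯ < r(X_sA) < r(A) in lexicographic order. Then c(X_1X_2⋯X_sA) < c(A) in lexicographic order. -/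
/-!
Reading a bit string as a binary number is strictly monotone for the lexicographic order, so
`r(A ∘ swap u v) < r(A)` with `u < v` says exactly that row `v` is lexicographically below
row `u`. At the first column `j` where these two rows differ, `A v j = 0 < 1 = A u j`: the columns
before `j` are fixed by the swap, and column `j` becomes lexicographically smaller, hence smaller
as a number. So `c` strictly decreases along every step of the chain.
-/

lemma rowVal_succ_s7 (m : ℕ) (x : Fin (m + 1) → Bool) :
    rowVal (m + 1) x = (x 0).toNat * 2 ^ m + rowVal m (Fin.tail x) := by
  rw [rowVal, Fin.sum_univ_succ, rowVal]
  congr 1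
  refine Finset.sum_congr rfl fun k _ => ?_
  simp only [Fin.val_succ, Fin.tail]
  congr 2
  omega

lemma rowVal_lt_two_pow (m : ℕ) (x : Fin m → Bool) : rowVal m x < 2 ^ m := by
  induction m with
  | zero => simp [rowVal]
  | succ m ih =>
    rw [rowVal_succ_s7, pow_succ]
    have := ih (Fin.tail x)
    cases x 0 <;> simp only [Bool.toNat_false, Bool.toNat_true] <;> omega

lemma rowVal_strictMono (m : ℕ) :
    StrictMono (fun x : Lex (Fin m → Bool) => rowVal m (ofLex x)) := by
  induction m with
  | zero => exact fun x y h => absurd h (by simp [Subsingleton.elim x y])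
  | succ m ih =>
    rintro x y ⟨j, hagree, hlt⟩
    simp only [rowVal_succ_s7]
    cases j using Fin.cases with
    | zero =>
      obtain ⟨hx, hy⟩ : ofLex x 0 = false ∧ ofLex y 0 = true := Bool.lt_iff.mp hlt
      have := rowVal_lt_two_pow m (Fin.tail (ofLex x))
      simp only [hx, hy, Bool.toNat_false, Bool.toNat_true]
      omega
    | succ j =>
      have h0 : ofLex x 0 = ofLex y 0 := hagree 0 (Fin.succ_pos j)
      have htail : toLex (Fin.tail (ofLex x)) < toLex (Fin.tail (ofLex y)) :=
        ⟨j, fun k hk => hagree k.succ (Fin.succ_lt_succ_iff.mpr hk), hlt⟩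
      rw [h0]
      exact Nat.add_lt_add_left (ih htail) _

lemma rowVal_lt_rowVal_iff {m : ℕ} {x y : Fin m → Bool} :
    rowVal m x < rowVal m y ↔ toLex x < toLex y :=
  (rowVal_strictMono m).lt_iff_lt

lemma Equiv.comp_swap_eq_self {ι α : Type*} [DecidableEq ι] {f : ι → α} {i j : ι}
    (h : f i = f j) : f ∘ Equiv.swap i j = f := by
  rw [Equiv.comp_swap_eq_update, h, Function.update_eq_self, ← h, Function.update_eq_self]

lemma Pi.toLex_comp_swap_lt_iff {ι α : Type*} [LinearOrder ι] [WellFoundedLT ι] [LinearOrder α]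
    {f : ι → α} {i j : ι} (hij : i ≤ j) :
    toLex (f ∘ Equiv.swap i j) < toLex f ↔ f j < f i := by
  refine ⟨fun h => ?_, Pi.lex_desc hij⟩
  by_contra! hle
  rcases hle.lt_or_eq with hlt | heq
  · have := Pi.lex_desc (f := f ∘ Equiv.swap i j) hij (by simpa using hlt)
    simp only [Function.comp_def, Equiv.swap_apply_self] at this
    exact lt_asymm h this
  · rw [Equiv.comp_swap_eq_self heq] at h
    exact lt_irrefl _ h

lemma ctup_comp_swap_lt_of_rtup_comp_swap_lt {n m : ℕ} (A : Fin n → Fin m → Bool) (u v : Fin n)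
    (h : toLex (rtup (A ∘ Equiv.swap u v)) < toLex (rtup A)) :
    toLex (ctup (A ∘ Equiv.swap u v)) < toLex (ctup A) := by
  wlog huv : u ≤ v generalizing u v
  · rw [Equiv.swap_comm] at h ⊢
    exact this v u h (le_of_not_ge huv)
  have hrows : toLex (A v) < toLex (A u) :=
    rowVal_lt_rowVal_iff.mp ((Pi.toLex_comp_swap_lt_iff (f := rtup A) huv).mp h)
  obtain ⟨j, hagree, hlt⟩ := hrows
  refine ⟨j, fun k hk => ?_, ?_⟩
  · exact congrArg (rowVal n) (Equiv.comp_swap_eq_self (f := fun i => A i k) (hagree k hk).symm)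
  · exact rowVal_lt_rowVal_iff.mpr (Pi.lex_desc (f := fun i => A i j) huv hlt)

/-- Theorem 1 a): given a chain of matrices `B k`, where `B s = A` and each
`B k` is obtained from `B (k+1)` by a row transposition (so that
`B k = X_{k+1} ⋯ X_s A`), if the row tuples strictly decrease lexicographically
along the chain, then `c(X_1 X_2 ⋯ X_s A) < c(A)` lexicographically. -/
theorem chain_row_transpositions {n m s : ℕ} (hs : 0 < s)
    (A : Fin n → Fin m → Bool) (B : Fin (s + 1) → Fin n → Fin m → Bool)
    (hlast : B (Fin.last s) = A)
    (hswap : ∀ k : Fin s, ∃ u v : Fin n, u ≠ v ∧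
      ∀ i j, B k.castSucc i j = B k.succ (Equiv.swap u v i) j)
    (hchain : ∀ k : Fin s, toLex (rtup (B k.castSucc)) < toLex (rtup (B k.succ))) :
    toLex (ctup (B 0)) < toLex (ctup A) := by
  have hstep : ∀ k : Fin s, toLex (ctup (B k.castSucc)) < toLex (ctup (B k.succ)) := by
    intro k
    obtain ⟨u, v, -, hrel⟩ := hswap k
    have hB : B k.castSucc = B k.succ ∘ Equiv.swap u v := funext₂ hrel
    have hk := hchain k
    rw [hB] at hk ⊢
    exact ctup_comp_swap_lt_of_rtup_comp_swap_lt _ u v hk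
  rw [← hlast]
  exact (Fin.strictMono_iff_lt_succ (f := fun k => toLex (ctup (B k)))).mpr hstep
    (Fin.lt_def.mpr hs)
end

section
/- Let A be an n×m binary matrix all of whose rows are equal with common row value 2^s − 1 for some 0 ≤ s ≤ m (i.e., each row is m−s zeros followed by s ones). Then A is canonical. -/
lemma geo_sum (n : ℕ) : ∑ i ∈ Finset.range n, 2 ^ i = 2 ^ n - 1 := by
  induction n with
  | zero => simp
  | succ k ih =>
    rw [Finset.sum_range_succ, ih]
    have h1 : 1 ≤ 2 ^ k := Nat.one_le_two_pow
    have h2 : 2 ^ (k + 1) = 2 * 2 ^ k := by rw [pow_succ]; ring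
    omega

lemma sum_two_pow_ge (S : Finset ℕ) : 2 ^ S.card - 1 ≤ ∑ e ∈ S, 2 ^ e := by
  induction S using Finset.strongInduction with
  | _ S ih =>
    rcases S.eq_empty_or_nonempty with rfl | hS
    · simp
    · set M := S.max' hS with hMdef
      have hM : M ∈ S := S.max'_mem hS
      have hsub : S ⊆ Finset.range (M + 1) := by
        intro x hx
        simp only [Finset.mem_range, Nat.lt_succ_iff]
        exact S.le_max' x hx
      have hcard : S.card ≤ M + 1 := by
        simpa using Finset.card_le_card hsub
      have h1 := ih (S.erase M) (Finset.erase_ssubset hM)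
      rw [Finset.card_erase_of_mem hM] at h1
      rw [← Finset.add_sum_erase _ _ hM]
      have h2 : 2 ^ (S.card - 1) ≤ 2 ^ M := Nat.pow_le_pow_right (by norm_num) (by omega)
      have hpos : 1 ≤ S.card := Finset.card_pos.mpr hS
      have h3 : 2 ^ S.card = 2 * 2 ^ (S.card - 1) := by
        rw [← pow_succ']; congr 1; omega
      omega

lemma rowVal_eq_sum_image (m : ℕ) (row : Fin m → Bool) :
    rowVal m row =
      ∑ e ∈ (Finset.univ.filter (fun j => row j = true)).image
          (fun j : Fin m => m - 1 - (j : ℕ)), 2 ^ e := by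
  rw [Finset.sum_image (by
    intro a _ b _ hab
    have hab2 : m - 1 - (a : ℕ) = m - 1 - (b : ℕ) := hab
    have := a.isLt; have := b.isLt
    exact Fin.ext (by omega))]
  rw [rowVal, Finset.sum_filter]
  apply Finset.sum_congr rfl
  intro j _
  cases hj : row j <;> simp [hj]

lemma image_A (m s : ℕ) (hs : s ≤ m) :
    (Finset.univ.filter
        (fun j : Fin m => (decide (m - s ≤ (j : ℕ)) : Bool) = true)).image
      (fun j : Fin m => m - 1 - (j : ℕ)) = Finset.range s := by
  ext e
  simp only [Finset.mem_image, Finset.mem_filter, Finset.mem_univ, true_and,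
    decide_eq_true_eq, Finset.mem_range]
  constructor
  · rintro ⟨j, hj, rfl⟩
    have := j.isLt
    omega
  · intro he
    refine ⟨⟨m - 1 - e, by omega⟩, ?_, ?_⟩ <;> simp <;> omega

theorem equal_rows_canonical {n m : ℕ} (A : Fin n → Fin m → Bool)
    (h : ∃ s ≤ m, ∀ (i : Fin n) (j : Fin m), A i j = decide (m - s ≤ (j : ℕ))) :
    Canonical A := by
  obtain ⟨s, hs, hA⟩ := h
  rintro B ⟨ρ, σ, hB⟩
  haveI : WellFoundedLT (Fin n) := inferInstance
  apply Pi.toLex_monotone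
  intro i
  have hArow : A i = fun j : Fin m => decide (m - s ≤ (j : ℕ)) := funext (hA i)
  have hAval : rtup A i = 2 ^ s - 1 := by
    show rowVal m (A i) = _
    rw [hArow, rowVal_eq_sum_image, image_A m s hs, geo_sum]
  have hBrow : B i = fun j : Fin m => decide (m - s ≤ ((σ j : Fin m) : ℕ)) := by
    funext j; rw [hB i j, hA]
  have hcardA : (Finset.univ.filter
      (fun j : Fin m => (decide (m - s ≤ (j : ℕ)) : Bool) = true)).card = s := by
    have hinj : Set.InjOn (fun j : Fin m => m - 1 - (j : ℕ))
        (Finset.univ.filter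
          (fun j : Fin m => (decide (m - s ≤ (j : ℕ)) : Bool) = true)) := by
      intro a _ b _ hab
      have hab2 : m - 1 - (a : ℕ) = m - 1 - (b : ℕ) := hab
      have := a.isLt; have := b.isLt
      exact Fin.ext (by omega)
    have := Finset.card_image_of_injOn hinj
    rw [image_A m s hs, Finset.card_range] at this
    omega
  have hTB : (Finset.univ.filter
      (fun j : Fin m => (decide (m - s ≤ ((σ j : Fin m) : ℕ)) : Bool) = true))
      = (Finset.univ.filter
        (fun j : Fin m => (decide (m - s ≤ (j : ℕ)) : Bool) = true)).map
        σ.symm.toEmbedding := by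
    ext j
    simp [Equiv.symm_apply_eq, eq_comm]
  have hcardB : (Finset.univ.filter
      (fun j : Fin m => (decide (m - s ≤ ((σ j : Fin m) : ℕ)) : Bool) = true)).card = s := by
    rw [hTB, Finset.card_map, hcardA]
  have hBval : 2 ^ s - 1 ≤ rtup B i := by
    show _ ≤ rowVal m (B i)
    rw [hBrow, rowVal_eq_sum_image]
    have hinj : Set.InjOn (fun j : Fin m => m - 1 - (j : ℕ))
        (Finset.univ.filter
          (fun j : Fin m => (decide (m - s ≤ ((σ j : Fin m) : ℕ)) : Bool) = true)) := by
      intro a _ b _ hab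
      have hab2 : m - 1 - (a : ℕ) = m - 1 - (b : ℕ) := hab
      have := a.isLt; have := b.isLt
      exact Fin.ext (by omega)
    have hc := Finset.card_image_of_injOn hinj
    calc 2 ^ s - 1 = 2 ^ ((Finset.univ.filter
          (fun j : Fin m => (decide (m - s ≤ ((σ j : Fin m) : ℕ)) : Bool) = true)).image
          (fun j : Fin m => m - 1 - (j : ℕ))).card - 1 := by rw [hc, hcardB]
      _ ≤ _ := sum_two_pow_ge _
  show rtup A i ≤ rtup B i
  omega
end

section
/- If A is a canonical n×m binary matrix and i is an index with ζ_1(A) < i ≤ n such that the i-th row has the same number of 1's as the first row (ε_i(A) = ε_1(A)), then the multiplicity of the first row is at least the multiplicity of the i-th row: ζ_1(A) ≥ ζ_i(A). -/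
/-- `ζ_i(A)`: the number of rows of `A` equal to the `i`-th row. -/
def zeta {n m : ℕ} (A : Fin n → Fin m → Bool) (i : Fin n) : ℕ :=
  (Finset.univ.filter fun k : Fin n => A k = A i).card

/-! Row values of a canonical matrix are weakly increasing (swapping an inverted pair of rows
would lower `r(A)` lexicographically), so the copies of the first row are exactly its first
`ζ_1(A)` rows. If row `i` had more copies and the same number of ones, a column permutation
turns row `i` into the first row and a row permutation moves its `ζ_i(A)` copies to the top;
the resulting matrix agrees with `A` on the first `ζ_1(A)` rows and is strictly smaller in the
next one, contradicting minimality. -/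

open Finset

lemma rowVal_eq_finFunctionFinEquiv (m : ℕ) (row : Fin m → Bool) :
    rowVal m row = finFunctionFinEquiv (Equiv.arrowCongr Fin.revPerm finTwoEquiv.symm row) := by
  rw [finFunctionFinEquiv_apply, rowVal, ← Equiv.sum_comp Fin.revPerm]
  refine sum_congr rfl fun j _ => ?_
  have hexp : m - 1 - (m - (j + 1)) = j := by omega
  cases h : row (Fin.rev j) <;> simp [finTwoEquiv, h, hexp]

lemma rowVal_injective (m : ℕ) : Function.Injective (rowVal m) := by
  intro u v h
  simp only [rowVal_eq_finFunctionFinEquiv] at h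
  exact (Equiv.injective _) (finFunctionFinEquiv.injective (Fin.val_injective h))

lemma sum_toNat_eq_card_filter {α : Type*} [Fintype α] (u : α → Bool) :
    ∑ j, (u j).toNat = #{j | u j = true} := by
  rw [card_filter]
  exact sum_congr rfl fun j _ => by cases u j <;> rfl

lemma Equiv.Perm.exists_comp_eq_of_card_eq {α : Type*} [Fintype α] {u v : α → Bool}
    (h : #{j | u j = true} = #{j | v j = true}) : ∃ σ : Perm α, v ∘ σ = u := by
  obtain ⟨σ, hσ⟩ := Perm.exists_map_finset_eq _ _ h
  refine ⟨σ, funext fun j => ?_⟩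
  have hj := mem_map' σ.toEmbedding (a := j) (s := {j | u j = true})
  rw [hσ] at hj
  simpa using hj

lemma Equiv.Perm.exists_apply_mem_of_lt_card {N : ℕ} (t : Finset (Fin N)) :
    ∃ ρ : Perm (Fin N), ∀ k : Fin N, (k : ℕ) < #t → ρ k ∈ t := by
  have hcard : #{k : Fin N | (k : ℕ) < #t} = #t := by
    rw [Fin.card_filter_val_lt, min_eq_right (by simpa using t.card_le_univ)]
  obtain ⟨ρ, hρ⟩ := Perm.exists_map_finset_eq _ _ hcard
  exact ⟨ρ, fun k hk => hρ ▸ mem_map_of_mem _ (by simpa using hk)⟩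

namespace Canonical

lemma monotone_rtup {N m : ℕ} {A : Fin N → Fin m → Bool} (hA : Canonical A) :
    Monotone (rtup A) := by
  intro k l hkl
  by_contra! hlt
  exact (Pi.lex_desc hkl hlt).not_ge (hA _ ⟨Equiv.swap k l, 1, fun _ _ => rfl⟩)

variable {n m : ℕ} {A : Fin (n + 1) → Fin m → Bool}

lemma row_eq_row_zero_iff (hA : Canonical A) (k : Fin (n + 1)) :
    A k = A 0 ↔ (k : ℕ) < zeta A 0 := by
  refine (Fin.lt_card_filter_univ_iff_apply_of_imp (A · = A 0) fun k l hlk hk => ?_).symm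
  refine rowVal_injective m (le_antisymm ?_ (hA.monotone_rtup (Fin.zero_le l)))
  exact (hA.monotone_rtup hlk).trans_eq (congrArg (rowVal m) hk)

lemma lt_zeta_zero_of_forall_le_eq (hA : Canonical A) {B : Fin (n + 1) → Fin m → Bool}
    (hAB : MatEquiv A B) (p : Fin (n + 1)) (hp : ∀ k ≤ p, B k = A 0) : (p : ℕ) < zeta A 0 := by
  by_contra! hle
  let q : Fin (n + 1) := ⟨zeta A 0, by omega⟩
  have hqp : q ≤ p := hle
  have hagree : ∀ k < q, rtup A k = rtup B k := fun k hk => by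
    rw [rtup, rtup, (hA.row_eq_row_zero_iff k).2 hk, hp k (hk.le.trans hqp)]
  have hq : rtup A q ≤ rtup A 0 := by
    simpa [rtup, hp q hqp] using Pi.apply_le_of_toLex (hA B hAB) hagree
  have hq0 : A q = A 0 := rowVal_injective m (le_antisymm hq (hA.monotone_rtup (Fin.zero_le q)))
  exact lt_irrefl _ ((hA.row_eq_row_zero_iff q).1 hq0)

end Canonical

theorem canonical_multiplicity {n m : ℕ} (A : Fin (n + 1) → Fin m → Bool)
    (hA : Canonical A) :
    ∀ i : Fin (n + 1), zeta A 0 ≤ (i : ℕ) →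
      (∑ j : Fin m, (A i j).toNat) = (∑ j : Fin m, (A 0 j).toNat) →
      zeta A i ≤ zeta A 0 := by
  intro i _ hsum
  by_contra! hlt
  obtain ⟨σ, hσ⟩ := Equiv.Perm.exists_comp_eq_of_card_eq (u := A 0) (v := A i)
    (by simpa only [sum_toNat_eq_card_filter] using hsum.symm)
  obtain ⟨ρ, hρ⟩ := Equiv.Perm.exists_apply_mem_of_lt_card {k | A k = A i}
  let p : Fin (n + 1) := ⟨zeta A 0, hlt.trans_le ((card_le_univ _).trans_eq (card_fin _))⟩
  have hB : ∀ k ≤ p, (fun k j => A (ρ k) (σ j)) k = A 0 := fun k hk => funext fun j => by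
    have hk' : (k : ℕ) < zeta A i := lt_of_le_of_lt hk hlt
    dsimp only
    rw [(mem_filter.1 (hρ k hk')).2, ← hσ, Function.comp_apply]
  exact lt_irrefl _ (hA.lt_zeta_zero_of_forall_le_eq ⟨ρ, σ, fun _ _ => rfl⟩ p hB)
end
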